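/- For a zero a of the Airy function (Ai(a) = 0) and any z ≠ a, one has (1/(z−a)) · Ai(z)/Ai'(a) = (1/(Ai'(a))²) · ∫₀^∞ Ai(u+z) Ai(u+a) du, provided Ai'(a) ≠ 0. -/

import Mathlib

/-!
Shifted Airy functions `Ai(· + z)` and `Ai(· + a)` solve `y'' = (u + z) y` and `y'' = (u + a) y`,
so their Wronskian `W(u) = Ai'(u+z) Ai(u+a) - Ai(u+z) Ai'(u+a)` satisfies
`W' = (z - a) Ai(u+z) Ai(u+a)`. Since `W → 0` at `+∞`, integrating over `(0, ∞)` gives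
`(z - a) ∫₀^∞ Ai(u+z) Ai(u+a) du = -W(0) = Ai z Ai' a - Ai' z Ai a`, and `Ai a = 0` leaves
`Ai z Ai' a`.
-/

open MeasureTheory Filter

theorem hasDerivAt_wronskian {f f' g g' : ℝ → ℝ} {p q x : ℝ}
    (hf : HasDerivAt f (f' x) x) (hf' : HasDerivAt f' (p * f x) x)
    (hg : HasDerivAt g (g' x) x) (hg' : HasDerivAt g' (q * g x) x) :
    HasDerivAt (fun y => f' y * g y - f y * g' y) ((p - q) * (f x * g x)) x := by
  exact ((hf'.mul hg).sub (hf.mul hg')).congr_deriv (by ring)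

section Airy

variable {Ai Ai' : ℝ → ℝ}

theorem hasDerivAt_airy_wronskian (hAi : ∀ w, HasDerivAt Ai (Ai' w) w)
    (hAi' : ∀ w, HasDerivAt Ai' (w * Ai w) w) (z a u : ℝ) :
    HasDerivAt (fun v => Ai' (v + z) * Ai (v + a) - Ai (v + z) * Ai' (v + a))
      ((z - a) * (Ai (u + z) * Ai (u + a))) u := by
  convert hasDerivAt_wronskian (f := fun v => Ai (v + z)) (g := fun v => Ai (v + a))
    ((hAi _).comp_add_const u z) ((hAi' _).comp_add_const u z)
    ((hAi _).comp_add_const u a) ((hAi' _).comp_add_const u a) using 2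
  ring

theorem tendsto_airy_wronskian_atTop (hAi0 : Tendsto Ai atTop (nhds 0))
    (hAi'0 : Tendsto Ai' atTop (nhds 0)) (z a : ℝ) :
    Tendsto (fun v => Ai' (v + z) * Ai (v + a) - Ai (v + z) * Ai' (v + a)) atTop (nhds 0) := by
  have shift (c : ℝ) : Tendsto (fun v : ℝ => v + c) atTop atTop :=
    tendsto_atTop_add_const_right _ c tendsto_id
  simpa using ((hAi'0.comp (shift z)).mul (hAi0.comp (shift a))).sub
    ((hAi0.comp (shift z)).mul (hAi'0.comp (shift a)))

theorem integral_Ioi_airy_mul_airy (hAi : ∀ w, HasDerivAt Ai (Ai' w) w)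
    (hAi' : ∀ w, HasDerivAt Ai' (w * Ai w) w) (hAi0 : Tendsto Ai atTop (nhds 0))
    (hAi'0 : Tendsto Ai' atTop (nhds 0)) {z a : ℝ} (hza : z ≠ a)
    (hint : IntegrableOn (fun u => Ai (u + z) * Ai (u + a)) (Set.Ioi 0)) :
    ∫ u in Set.Ioi (0 : ℝ), Ai (u + z) * Ai (u + a) = (Ai z * Ai' a - Ai' z * Ai a) / (z - a) := by
  have hza' : z - a ≠ 0 := sub_ne_zero.mpr hza
  have hderiv (u : ℝ) :
      HasDerivAt (fun v => (Ai' (v + z) * Ai (v + a) - Ai (v + z) * Ai' (v + a)) / (z - a))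
        (Ai (u + z) * Ai (u + a)) u := by
    simpa only [mul_div_cancel_left₀ _ hza'] using
      (hasDerivAt_airy_wronskian hAi hAi' z a u).div_const (z - a)
  rw [integral_Ioi_of_hasDerivAt_of_tendsto' (fun u _ => hderiv u) hint
    (by simpa using (tendsto_airy_wronskian_atTop hAi0 hAi'0 z a).div_const (z - a))]
  simp only [zero_add]
  ring

end Airy

theorem airy_kernel_resolvent (Ai Ai' : ℝ → ℝ)
    (hAi : ∀ w, HasDerivAt Ai (Ai' w) w)
    (hAi' : ∀ w, HasDerivAt Ai' (w * Ai w) w)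
    (hAi0 : Tendsto Ai atTop (nhds 0))
    (hAi'0 : Tendsto Ai' atTop (nhds 0))
    (a : ℝ) (ha : Ai a = 0) (ha' : Ai' a ≠ 0)
    (z : ℝ) (hza : z ≠ a)
    (hint : IntegrableOn (fun u => Ai (u + z) * Ai (u + a)) (Set.Ioi 0)) :
    (1 / (z - a)) * (Ai z / Ai' a) =
      (1 / (Ai' a) ^ 2) * ∫ u in Set.Ioi (0 : ℝ), Ai (u + z) * Ai (u + a) := by
  rw [integral_Ioi_airy_mul_airy hAi hAi' hAi0 hAi'0 hza hint, ha, mul_zero, sub_zero]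
  field_simp [sub_ne_zero.mpr hza]
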